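/- Let X be a Banach space and (A(n))_{n∈Z−\{0}} a sequence of bounded linear operators on X. Suppose that: (a) for every bounded sequence (y(n))_{n∈Z−\{0}} in X there exists a bounded sequence (x(n))_{n∈Z−} in X with x(n+1) = A(n)x(n) + y(n) for all n ∈ Z−\{0}; (b) the subspace U of X consisting of all v ∈ X for which there exists a bounded sequence (x(n))_{n∈Z−} in X with x(0) = v and x(n) = A(n−1)x(n−1) for all n ≤ 0 (not assumed closed) admits a closed subspace Z of X with X = U ⊕ Z; and (c) the only bounded sequence (x(n))_{n∈Z−} in X with x(0) = 0 and x(n) = A(n−1)x(n−1) for all n ≤ 0 is the zero sequence. Then the system x(n+1) = A(n)x(n) admits an exponential dichotomy on Z−. -/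

import Mathlib

open Real ContinuousLinearMap

noncomputable section

universe u

variable {X : Type u} [NormedAddCommGroup X] [NormedSpace ℝ X]

/-- The cocycle associated with the system `x(n+1) = A(n) x(n)`, as a function of the
number of steps: `cocycleAux A n k = A(n+k-1) ∘ ⋯ ∘ A(n)`. -/
def cocycleAux (A : ℤ → X →L[ℝ] X) (n : ℤ) : ℕ → (X →L[ℝ] X)
  | 0 => ContinuousLinearMap.id ℝ X
  | k + 1 => (A (n + k)).comp (cocycleAux A n k)

/-- The cocycle `Φ(m, n) = A(m-1) ⋯ A(n)` for `m > n`, and `Φ(n, n) = Id`. -/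
def Phi (A : ℤ → X →L[ℝ] X) (m n : ℤ) : X →L[ℝ] X :=
  cocycleAux A n (m - n).toNat

/-- The system `x(n+1) = A(n) x(n)`, `n ∈ J'`, admits an exponential dichotomy on `J`
with respect to the family of (bounded) projections `P(n)`, `n ∈ J`:
there are constants `K, α > 0` such that
(i) `P(n)` are projections, `A(n) P(n) = P(n+1) A(n)` for `n ∈ J'`, and `A(n)` maps
`ker P(n)` bijectively onto `ker P(n+1)` for `n ∈ J'`;
(ii) `‖Φ(m,n) P(n)‖ ≤ K e^{-α (m-n)}` for `m ≥ n` in `J`;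
(iii) `‖Φ(m,n) (Id - P(n))‖ ≤ K e^{-α (n-m)}` for `m ≤ n` in `J`, where
`Φ(m,n) : ker P(n) → ker P(m)` denotes the inverse of `Φ(n,m)` restricted to `ker P(m)`;
the latter is phrased as: whenever `x ∈ ker P(m)` and `Φ(n,m) x = (Id - P(n)) y`,
then `‖x‖ ≤ K e^{-α (n-m)} ‖y‖`. -/
def IsExpDichotomy (J J' : Set ℤ) (A P : ℤ → X →L[ℝ] X) : Prop :=
  ∃ K α : ℝ, 0 < K ∧ 0 < α ∧
    (∀ n ∈ J, (P n).comp (P n) = P n) ∧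
    (∀ n ∈ J', (A n).comp (P n) = (P (n + 1)).comp (A n)) ∧
    (∀ n ∈ J', Set.BijOn (A n) {x : X | P n x = 0} {x : X | P (n + 1) x = 0}) ∧
    (∀ m n : ℤ, m ∈ J → n ∈ J → n ≤ m →
      ‖(Phi A m n).comp (P n)‖ ≤ K * Real.exp (-α * ((m : ℝ) - (n : ℝ)))) ∧
    (∀ m n : ℤ, m ∈ J → n ∈ J → m ≤ n → ∀ x y : X,
      P m x = 0 → Phi A n m x = y - P n y →
      ‖x‖ ≤ K * Real.exp (-α * ((n : ℝ) - (m : ℝ))) * ‖y‖)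

/-- The system `x(n+1) = A(n) x(n)`, `n ∈ J'`, admits an exponential dichotomy on `J`. -/
def ExpDichotomy (J J' : Set ℤ) (A : ℤ → X →L[ℝ] X) : Prop :=
  ∃ P : ℤ → X →L[ℝ] X, IsExpDichotomy J J' A P

/-- A subspace (given as a set) `S` of `X` is complemented: there is a closed subspace `Z`
of `X` with `X = S ⊕ Z`. -/
def IsComplementedSubspace (S : Set X) : Prop :=
  ∃ Z : Submodule ℝ X, IsClosed (Z : Set X) ∧
    (∀ v ∈ S, v ∈ Z → v = (0 : X)) ∧ ∀ v : X, ∃ s ∈ S, ∃ z ∈ Z, v = s + z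

/-- The subspace `S = {v : sup_{n ∈ ℤ⁺} ‖Φ(n,0) v‖ < ∞}` of initial conditions of bounded
forward solutions. -/
def Sset (A : ℤ → X →L[ℝ] X) : Set X :=
  {v : X | ∃ C : ℝ, ∀ n : ℤ, 0 ≤ n → ‖Phi A n 0 v‖ ≤ C}

/-- The subspace `U(m)` of all `v` for which there is a bounded sequence `(x(n))_{n ≤ m}`
with `x(m) = v` and `x(n) = A(n-1) x(n-1)` for `n ≤ m`. -/
def Uset (A : ℤ → X →L[ℝ] X) (m : ℤ) : Set X :=
  {v : X | ∃ x : ℤ → X, x m = v ∧ (∃ C : ℝ, ∀ n : ℤ, n ≤ m → ‖x n‖ ≤ C) ∧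
    ∀ n : ℤ, n ≤ m → x n = A (n - 1) (x (n - 1))}

variable {X1 : Type u} {X2 : Type u} [NormedAddCommGroup X1] [NormedSpace ℝ X1]
  [NormedAddCommGroup X2] [NormedSpace ℝ X2]

/-- The triangular system operator `(x1, x2) ↦ (A11(n) x1 + A12(n) x2, A22(n) x2)`. -/
def triangular (A11 : ℤ → X1 →L[ℝ] X1) (A12 : ℤ → X2 →L[ℝ] X1)
    (A22 : ℤ → X2 →L[ℝ] X2) (n : ℤ) : (X1 × X2) →L[ℝ] X1 × X2 :=
  (((A11 n).comp (fst ℝ X1 X2)) + ((A12 n).comp (snd ℝ X1 X2))).prod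
    ((A22 n).comp (snd ℝ X1 X2))

/-- The diagonal system operator `(x1, x2) ↦ (A11(n) x1, A22(n) x2)`. -/
def diagonal (A11 : ℤ → X1 →L[ℝ] X1) (A22 : ℤ → X2 →L[ℝ] X2) (n : ℤ) :
    (X1 × X2) →L[ℝ] X1 × X2 :=
  (A11 n).prodMap (A22 n)

/-!
Fix a closed complement `Z` of `U(0)`. By (a), (b) and (c), every bounded forcing term `y` has a
unique bounded solution `x` with `x(0) ∈ Z`; the graph of `y ↦ x` is closed, so the open mapping
theorem gives `‖x‖∞ ≤ D ‖y‖∞`. Forcing with a single impulse `v` at time `t - 1` splits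
`X = Φ(0,t)⁻¹ Z ⊕ U(t)` with a projection of norm at most `D`, and these projections commute with
the dynamics. The exponential bounds follow from Perron's test sequences `x(i) = σ(i) w(i)` along an
orbit `w`, with `σ` a partial sum of `‖w(j)‖⁻¹`: their forcing has norm at most `1`, so
`|σ(i)| ‖w(i)‖ ≤ D`, which makes the partial sums grow by the factor `(D + 1) / D` at every step;
hence orbits decay at rate `D / (D + 1)` forwards in `Φ(0,t)⁻¹ Z` and backwards in `U(t)`.
-/

open scoped BoundedContinuousFunction

lemma exists_bound_Iic_of_exists_bound_Iic {E : Type*} [SeminormedAddCommGroup E] {x : ℤ → E}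
    {m : ℤ} (hx : ∃ C, ∀ n ≤ m, ‖x n‖ ≤ C) (k : ℤ) : ∃ C, ∀ n ≤ k, ‖x n‖ ≤ C := by
  obtain ⟨C, hC⟩ := hx
  refine ⟨max C (∑ j ∈ Finset.Icc m k, ‖x j‖), fun n hn => ?_⟩
  rcases le_or_gt n m with hnm | hmn
  · exact le_max_of_le_left (hC n hnm)
  · exact le_max_of_le_right <| Finset.single_le_sum (f := fun j => ‖x j‖)
      (fun _ _ => norm_nonneg _) (Finset.mem_Icc.2 ⟨hmn.le, hn⟩)

lemma sum_filter_le_add_one_sub {M : Type*} [AddCommGroup M] (s : Finset ℤ) (f : ℤ → M)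
    (i : ℤ) :
    ∑ j ∈ s with j ≤ i + 1, f j - ∑ j ∈ s with j ≤ i, f j = if i + 1 ∈ s then f (i + 1) else 0 := by
  rw [Finset.sum_filter, Finset.sum_filter, ← Finset.sum_sub_distrib, ← Finset.sum_ite_eq']
  refine Finset.sum_congr rfl fun j _ => ?_
  split_ifs <;> first | omega | simp

lemma sum_filter_le_of_le {M : Type*} [AddCommMonoid M] {s : Finset ℤ} {f : ℤ → M} {n i : ℤ}
    (hs : ∀ j ∈ s, j ≤ n) (hi : n ≤ i) : ∑ j ∈ s with j ≤ i, f j = ∑ j ∈ s, f j := by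
  rw [Finset.filter_true_of_mem fun j hj => (hs j hj).trans hi]

lemma pow_mul_le_of_le_mul_sub {S : ℕ → ℝ} {D : ℝ} (hD : 0 < D) {N : ℕ}
    (h : ∀ k < N, S k ≤ D * (S (k + 1) - S k)) : ((D + 1) / D) ^ N * S 0 ≤ S N := by
  induction N with
  | zero => simp
  | succ N ih =>
    have hstep : (D + 1) / D * S N ≤ S (N + 1) := by
      rw [div_mul_eq_mul_div, div_le_iff₀ hD]
      linarith [h N N.lt_succ_self]
    calc ((D + 1) / D) ^ (N + 1) * S 0 = (D + 1) / D * (((D + 1) / D) ^ N * S 0) := by ring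
      _ ≤ (D + 1) / D * S N :=
        mul_le_mul_of_nonneg_left (ih fun k hk => h k (hk.trans N.lt_succ_self)) (by positivity)
      _ ≤ S (N + 1) := hstep

/-- Perron's argument, with `S` the partial sums of `‖w‖⁻¹` along an orbit `w` and `a = ‖w N‖`. -/
lemma le_mul_pow_mul_of_mul_le {S : ℕ → ℝ} {D a b : ℝ} (hD : 0 < D) (hb : 0 < b) (ha : 0 ≤ a)
    {N : ℕ} (hS0 : S 0 = b⁻¹) (h : ∀ k < N, S k ≤ D * (S (k + 1) - S k)) (haS : a * S N ≤ D) :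
    a ≤ D * (D / (D + 1)) ^ N * b := by
  have hgrowth := pow_mul_le_of_le_mul_sub hD h
  rw [hS0] at hgrowth
  have key : a * (((D + 1) / D) ^ N * b⁻¹) ≤ D :=
    (mul_le_mul_of_nonneg_left hgrowth ha).trans haS
  have hinv : ((D + 1) / D) ^ N * (D / (D + 1)) ^ N = 1 := by
    rw [← mul_pow, div_mul_div_comm, mul_comm (D + 1), div_self (by positivity), one_pow]
  calc a = a * (((D + 1) / D) ^ N * (D / (D + 1)) ^ N) * (b⁻¹ * b) := by
        rw [hinv, inv_mul_cancel₀ hb.ne', mul_one, mul_one]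
    _ = a * (((D + 1) / D) ^ N * b⁻¹) * ((D / (D + 1)) ^ N * b) := by ring
    _ ≤ D * ((D / (D + 1)) ^ N * b) := by gcongr
    _ = D * (D / (D + 1)) ^ N * b := by ring

lemma exists_boundedContinuousFunction_eq_ite {E : Type*} [SeminormedAddCommGroup E]
    {x : ℤ → E} {k : ℤ} {C : ℝ} (hC : 0 ≤ C) (hx : ∀ n ≤ k, ‖x n‖ ≤ C) :
    ∃ x' : ℤ →ᵇ E, ‖x'‖ ≤ C ∧ ∀ n, x' n = if n ≤ k then x n else 0 := by
  have hb : ∀ n, ‖(if n ≤ k then x n else 0)‖ ≤ C := fun n => by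
    split_ifs with h
    · exact hx n h
    · simpa using hC
  exact ⟨.ofNormedAddCommGroupDiscrete _ C hb,
    (BoundedContinuousFunction.norm_le hC).2 hb, fun _ => rfl⟩

lemma norm_pi_single_apply_le {E : Type*} [SeminormedAddCommGroup E] (i n : ℤ) (v : E) :
    ‖(Pi.single i v : ℤ → E) n‖ ≤ ‖v‖ := by
  by_cases h : n = i <;> simp [h]

lemma Submodule.projection_eq_of_mem {R E : Type*} [Ring R] [AddCommGroup E] [Module R E]
    {p q : Submodule R E} (h : IsCompl p q) {x a : E} (ha : a ∈ p) (hxa : x - a ∈ q) :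
    p.projection q h x = a := by
  rw [← add_sub_cancel a x, map_add, projection_apply_of_mem_left h ha,
    projection_apply_of_mem_right h hxa, add_zero]

section Cocycle

variable (A : ℤ → X →L[ℝ] X)

lemma Phi_of_le {m n : ℤ} (h : m ≤ n) : Phi A m n = ContinuousLinearMap.id ℝ X := by
  rw [Phi, Int.toNat_of_nonpos (by omega), cocycleAux]

lemma Phi_succ_apply {m n : ℤ} (h : n ≤ m) (v : X) :
    Phi A (m + 1) n v = A m (Phi A m n v) := by
  rw [Phi, Phi, show (m + 1 - n).toNat = (m - n).toNat + 1 by omega, cocycleAux,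
    show n + ((m - n).toNat : ℤ) = m by omega, comp_apply]

variable {A}

lemma eq_Phi_of_succ {x : ℤ → X} {m n : ℤ} (hnm : n ≤ m)
    (hx : ∀ k, n ≤ k → k < m → x (k + 1) = A k (x k)) : x m = Phi A m n (x n) := by
  induction m, hnm using Int.leInduction with
  | base => rw [Phi_of_le A le_rfl, id_apply]
  | succ m hnm ih =>
    rw [hx m hnm (by omega), ih fun k hk hkm => hx k hk (by omega), Phi_succ_apply A hnm]

lemma Phi_trans {i j k : ℤ} (hij : i ≤ j) (hjk : j ≤ k) (v : X) :
    Phi A k j (Phi A j i v) = Phi A k i v :=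
  (eq_Phi_of_succ (x := fun l => Phi A l i v) hjk fun _ hjl _ =>
    Phi_succ_apply A (hij.trans hjl) v).symm

lemma Phi_map_apply {m n : ℤ} (h : n < m) (v : X) : Phi A m (n + 1) (A n v) = Phi A m n v := by
  rw [← Phi_trans (i := n) (j := n + 1) (k := m) (by omega) h, Phi_succ_apply A le_rfl,
    Phi_of_le A le_rfl, id_apply]

end Cocycle

section PastBounded

variable {A : ℤ → X →L[ℝ] X}

variable (A) in
def Usub (m : ℤ) : Submodule ℝ X where
  carrier := Uset A m
  zero_mem' := ⟨0, rfl, ⟨0, fun _ _ => by simp⟩, fun _ _ => by simp⟩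
  add_mem' := by
    rintro _ _ ⟨x, rfl, ⟨C, hC⟩, hx⟩ ⟨y, rfl, ⟨C', hC'⟩, hy⟩
    exact ⟨x + y, rfl, ⟨C + C', fun n hn =>
      (norm_add_le _ _).trans (add_le_add (hC n hn) (hC' n hn))⟩,
      fun n hn => by simp [hx n hn, hy n hn]⟩
  smul_mem' := by
    rintro c _ ⟨x, rfl, ⟨C, hC⟩, hx⟩
    exact ⟨c • x, rfl, ⟨‖c‖ * C, fun n hn => (norm_smul c (x n)).trans_le
      (mul_le_mul_of_nonneg_left (hC n hn) (norm_nonneg c))⟩, fun n hn => by simp [hx n hn]⟩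

lemma mem_Uset_of_le {x : ℤ → X} {m k : ℤ} (hb : ∃ C, ∀ n ≤ m, ‖x n‖ ≤ C)
    (hx : ∀ n < m, x (n + 1) = A n (x n)) (hk : k ≤ m) : x k ∈ Uset A k := by
  obtain ⟨C, hC⟩ := hb
  exact ⟨x, rfl, ⟨C, fun n hn => hC n (hn.trans hk)⟩,
    fun n hn => by simpa using hx (n - 1) (by omega)⟩

lemma exists_orbit_of_mem_Uset {m : ℤ} {v : X} (hv : v ∈ Uset A m) :
    ∃ z : ℤ → X, z m = v ∧ (∀ j, z (j + 1) = A j (z j)) ∧ ∀ k, ∃ C, ∀ n ≤ k, ‖z n‖ ≤ C := by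
  obtain ⟨x, rfl, ⟨C, hC⟩, hx⟩ := hv
  set z : ℤ → X := fun j => if j ≤ m then x j else Phi A j m (x m)
  have hz : ∀ j, m ≤ j → z j = Phi A j m (x m) := fun j hj => by
    rcases hj.eq_or_lt with rfl | hj
    · simp [z, Phi_of_le A le_rfl]
    · simp [z, not_le.2 hj]
  refine ⟨z, by simp [z], fun j => ?_, exists_bound_Iic_of_exists_bound_Iic
    ⟨C, fun n hn => by rw [show z n = x n from if_pos hn]; exact hC n hn⟩⟩
  rcases lt_or_ge j m with hjm | hmj
  · simpa [z, hjm.le, Int.add_one_le_iff.2 hjm] using hx (j + 1) (by omega)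
  · rw [hz j hmj, hz (j + 1) (by omega), Phi_succ_apply A hmj]

lemma Phi_mem_Uset {m k : ℤ} (hmk : m ≤ k) {v : X} (hv : v ∈ Uset A m) :
    Phi A k m v ∈ Uset A k := by
  obtain ⟨z, rfl, hz, hb⟩ := exists_orbit_of_mem_Uset hv
  rw [← eq_Phi_of_succ hmk fun j _ _ => hz j]
  exact mem_Uset_of_le (hb k) (fun j _ => hz j) le_rfl

lemma map_mem_Uset {m : ℤ} {v : X} (hv : v ∈ Uset A m) : A m v ∈ Uset A (m + 1) := by
  simpa [Phi_succ_apply A le_rfl, Phi_of_le A le_rfl] using Phi_mem_Uset (k := m + 1) (by omega) hv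

variable (A) in
def HasUniqueBoundedPast : Prop :=
  ∀ x : ℤ → X, x 0 = 0 → (∃ C : ℝ, ∀ n : ℤ, n ≤ 0 → ‖x n‖ ≤ C) →
    (∀ n : ℤ, n ≤ 0 → x n = A (n - 1) (x (n - 1))) → ∀ n : ℤ, n ≤ 0 → x n = 0

lemma eq_zero_of_mem_Uset_of_Phi_eq_zero (huniq : HasUniqueBoundedPast A) {m : ℤ} (hm : m ≤ 0)
    {v : X} (hv : v ∈ Uset A m) (h : Phi A 0 m v = 0) : v = 0 := by
  obtain ⟨z, rfl, hz, hb⟩ := exists_orbit_of_mem_Uset hv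
  refine huniq z ?_ (hb 0) (fun n _ => by simpa using hz (n - 1)) m hm
  rwa [eq_Phi_of_succ hm fun j _ _ => hz j]

end PastBounded

section Solutions

variable {A : ℤ → X →L[ℝ] X} {Z : Submodule ℝ X}

variable (A) in
def IsAdmissible : Prop :=
  ∀ y : ℤ → X, (∃ C : ℝ, ∀ n : ℤ, n ≤ -1 → ‖y n‖ ≤ C) →
    ∃ x : ℤ → X, (∃ C : ℝ, ∀ n : ℤ, n ≤ 0 → ‖x n‖ ≤ C) ∧
      ∀ n : ℤ, n ≤ -1 → x (n + 1) = A n (x n) + y n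

lemma exists_solution_mem (hadm : IsAdmissible A)
    (hdecomp : ∀ v : X, ∃ s ∈ Uset A 0, ∃ z ∈ Z, v = s + z) {y : ℤ → X}
    (hy : ∃ C, ∀ n ≤ -1, ‖y n‖ ≤ C) :
    ∃ x : ℤ → X, (∃ C, ∀ n ≤ 0, ‖x n‖ ≤ C) ∧ (∀ n ≤ -1, x (n + 1) = A n (x n) + y n) ∧
      x 0 ∈ Z := by
  obtain ⟨x, ⟨C, hC⟩, hx⟩ := hadm y hy
  obtain ⟨_, ⟨w, rfl, ⟨C', hC'⟩, hw⟩, z, hz, hxz⟩ := hdecomp (x 0)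
  refine ⟨x - w, ⟨C + C', fun n hn => (norm_sub_le _ _).trans (add_le_add (hC n hn) (hC' n hn))⟩,
    fun n hn => ?_, by simpa [hxz] using hz⟩
  have hw' := hw (n + 1) (by omega)
  rw [add_sub_cancel_right] at hw'
  simp only [Pi.sub_apply, hx n hn, hw', map_sub]
  abel

variable (A Z) in
/-- The graph of the solution operator `y ↦ x` normalised by `x(0) ∈ Z`; `x` is extended by zero
to positive times, and only `y(n)` for `n ≤ -1` matters. -/
def solutionGraph : Submodule ℝ ((ℤ →ᵇ X) × (ℤ →ᵇ X)) where
  carrier := {p | (∀ n ≤ -1, p.2 (n + 1) = A n (p.2 n) + p.1 n) ∧ p.2 0 ∈ Z ∧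
    ∀ n, 0 < n → p.2 n = 0}
  zero_mem' := ⟨fun _ _ => by simp, Z.zero_mem, fun _ _ => rfl⟩
  add_mem' := by
    rintro p q ⟨hp, hp0, hp1⟩ ⟨hq, hq0, hq1⟩
    refine ⟨fun n hn => ?_, Z.add_mem hp0 hq0, fun n hn => by simp [hp1 n hn, hq1 n hn]⟩
    simp only [Prod.fst_add, Prod.snd_add, BoundedContinuousFunction.coe_add, Pi.add_apply,
      hp n hn, hq n hn, map_add]
    abel
  smul_mem' := by
    rintro c p ⟨hp, hp0, hp1⟩
    exact ⟨fun n hn => by simp [hp n hn], Z.smul_mem c hp0, fun n hn => by simp [hp1 n hn]⟩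

lemma isClosed_solutionGraph (hZ : IsClosed (Z : Set X)) :
    IsClosed (solutionGraph A Z : Set ((ℤ →ᵇ X) × (ℤ →ᵇ X))) := by
  have ev : ∀ n, Continuous fun f : ℤ →ᵇ X => f n := fun n => continuous_eval_const n
  show IsClosed {p : (ℤ →ᵇ X) × (ℤ →ᵇ X) | _ ∧ _ ∧ _}
  simp only [Set.ofPred_and, Set.ofPred_forall]
  refine .inter (isClosed_iInter fun n => isClosed_iInter fun _ => isClosed_eq ?_ ?_)
    (.inter (hZ.preimage ((ev 0).comp continuous_snd))
      (isClosed_iInter fun n => isClosed_iInter fun _ => isClosed_eq ?_ continuous_const))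
  · exact (ev _).comp continuous_snd
  · exact ((A n).continuous.comp ((ev n).comp continuous_snd)).add ((ev n).comp continuous_fst)
  · exact (ev n).comp continuous_snd

lemma mk_mem_solutionGraph {y x' : ℤ →ᵇ X} {x : ℤ → X}
    (hx' : ∀ n, x' n = if n ≤ 0 then x n else 0) (hx : ∀ n ≤ -1, x (n + 1) = A n (x n) + y n)
    (h0 : x 0 ∈ Z) : (y, x') ∈ solutionGraph A Z :=
  ⟨fun n hn => by simp [hx', show n ≤ 0 by omega, show n + 1 ≤ 0 by omega, hx n hn],
    by simpa [hx'] using h0, fun n hn => by simp [hx', not_le.2 hn]⟩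

lemma eq_zero_of_zero_mem_solutionGraph (hZU : ∀ v ∈ Uset A 0, v ∈ Z → v = 0)
    (huniq : HasUniqueBoundedPast A) {x : ℤ →ᵇ X} (h : (0, x) ∈ solutionGraph A Z) :
    x = 0 := by
  obtain ⟨hx, h0, hpos⟩ := h
  have hb : ∃ C, ∀ n ≤ 0, ‖x n‖ ≤ C := ⟨‖x‖, fun n _ => x.norm_coe_le_norm n⟩
  have hhom : ∀ n ≤ -1, x (n + 1) = A n (x n) := fun n hn => by simpa using hx n hn
  have hx0 : x 0 = 0 := hZU _ (mem_Uset_of_le hb (fun n hn => hhom n (by omega)) le_rfl) h0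
  ext n
  rcases le_or_gt n 0 with hn | hn
  · exact huniq x hx0 hb (fun n hn => by simpa using hhom (n - 1) (by omega)) n hn
  · exact hpos n hn

variable (A Z) in
def HasSolutionBound (D : ℝ) : Prop :=
  ∀ (x : ℤ → X) (c : ℝ), (∃ C, ∀ n ≤ 0, ‖x n‖ ≤ C) → x 0 ∈ Z →
    (∀ n ≤ -1, ‖x (n + 1) - A n (x n)‖ ≤ c) → ∀ n ≤ 0, ‖x n‖ ≤ D * c

/-- The graph of the solution operator `y ↦ x` is closed, so the open mapping theorem applied to
the first projection of the graph bounds the operator. -/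
theorem exists_hasSolutionBound [CompleteSpace X] (hZ : IsClosed (Z : Set X))
    (hadm : IsAdmissible A) (hdecomp : ∀ v : X, ∃ s ∈ Uset A 0, ∃ z ∈ Z, v = s + z)
    (hZU : ∀ v ∈ Uset A 0, v ∈ Z → v = 0) (huniq : HasUniqueBoundedPast A) :
    ∃ D, 0 < D ∧ HasSolutionBound A Z D := by
  have : CompleteSpace (solutionGraph A Z) := (isClosed_solutionGraph hZ).completeSpace_coe
  let f := (ContinuousLinearMap.fst ℝ (ℤ →ᵇ X) (ℤ →ᵇ X)).comp (solutionGraph A Z).subtypeL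
  have hf : Function.Surjective f := fun y => by
    obtain ⟨x, ⟨C, hC⟩, hx, h0⟩ :=
      exists_solution_mem hadm hdecomp ⟨‖y‖, fun n _ => y.norm_coe_le_norm n⟩
    obtain ⟨x', -, hx'⟩ := exists_boundedContinuousFunction_eq_ite (le_max_right C 0)
      fun n hn => (hC n hn).trans (le_max_left C 0)
    exact ⟨⟨(y, x'), mk_mem_solutionGraph hx' hx h0⟩, rfl⟩
  obtain ⟨D, hD, hfD⟩ := f.exists_preimage_norm_le hf
  refine ⟨D, hD, fun x c ⟨C, hC⟩ h0 hc n hn => ?_⟩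
  have hc0 : 0 ≤ c := (norm_nonneg _).trans (hc (-1) le_rfl)
  obtain ⟨y', hy'c, hy'⟩ := exists_boundedContinuousFunction_eq_ite hc0 hc
  obtain ⟨x', -, hx'⟩ := exists_boundedContinuousFunction_eq_ite (le_max_right C 0)
    fun n hn => (hC n hn).trans (le_max_left C 0)
  have hmem : (y', x') ∈ solutionGraph A Z :=
    mk_mem_solutionGraph hx' (fun n hn => by simp [hy', hn]) h0
  obtain ⟨p, hpy, hpD⟩ := hfD y'
  have hpy : (p : (ℤ →ᵇ X) × (ℤ →ᵇ X)).1 = y' := hpy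
  have hp : (p : (ℤ →ᵇ X) × (ℤ →ᵇ X)) = (y', x') := by
    have hd := sub_mem p.2 hmem
    rw [show (p : (ℤ →ᵇ X) × (ℤ →ᵇ X)) - (y', x') = (0, (p : (ℤ →ᵇ X) × (ℤ →ᵇ X)).2 - x') from
      Prod.ext (sub_eq_zero.2 hpy) rfl] at hd
    exact Prod.ext hpy (sub_eq_zero.1 (eq_zero_of_zero_mem_solutionGraph hZU huniq hd))
  calc ‖x n‖ = ‖x' n‖ := by simp [hx', hn]
    _ ≤ ‖x'‖ := x'.norm_coe_le_norm n
    _ ≤ ‖p‖ := by rw [← Submodule.norm_coe, hp]; exact norm_snd_le (y', x')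
    _ ≤ D * ‖y'‖ := hpD
    _ ≤ D * c := by gcongr

end Solutions

section Estimates

variable {A : ℤ → X →L[ℝ] X} {Z : Submodule ℝ X} {D : ℝ}

/-- Perron's test sequence `x(i) = σ(i) w(i)`, where `σ` is a shifted partial sum of `‖w‖⁻¹`
over `s`: its defect at `i` is `‖w(i+1)‖⁻¹ w(i+1)` or `0`, of norm at most `1`. -/
lemma abs_sum_sub_mul_norm_le (hD : HasSolutionBound A Z D) (s : Finset ℤ) (c : ℝ) {w : ℤ → X}
    (hw : ∀ i ≤ -1, ∑ j ∈ s with j ≤ i, ‖w j‖⁻¹ ≠ c → w (i + 1) = A i (w i))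
    (hb : ∃ C, ∀ i ≤ 0, ‖w i‖ ≤ C) (h0 : (∑ j ∈ s with j ≤ 0, ‖w j‖⁻¹ - c) • w 0 ∈ Z)
    {i : ℤ} (hi : i ≤ 0) : |∑ j ∈ s with j ≤ i, ‖w j‖⁻¹ - c| * ‖w i‖ ≤ D := by
  set σ : ℤ → ℝ := fun i => ∑ j ∈ s with j ≤ i, ‖w j‖⁻¹ - c
  obtain ⟨C, hC⟩ := hb
  have hσ : ∀ i, |σ i| ≤ ∑ j ∈ s, ‖w j‖⁻¹ + |c| := fun i => by
    refine (abs_sub _ _).trans (add_le_add_left ?_ _)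
    rw [abs_of_nonneg (by positivity)]
    exact Finset.sum_le_sum_of_subset_of_nonneg (Finset.filter_subset _ _) fun _ _ _ => by
      positivity
  have hdefect : ∀ i ≤ -1,
      σ (i + 1) • w (i + 1) - A i (σ i • w i) = (σ (i + 1) - σ i) • w (i + 1) := fun i hi => by
    by_cases h : σ i = 0
    · simp [h]
    · rw [map_smul, ← hw i hi (by simpa [σ, sub_eq_zero] using h), ← sub_smul]
  have hΔ : ∀ i, σ (i + 1) - σ i = if i + 1 ∈ s then ‖w (i + 1)‖⁻¹ else 0 := fun i => by
    simp only [σ, sub_sub_sub_cancel_right, sum_filter_le_add_one_sub]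
  have key := hD (fun i => σ i • w i) 1
    ⟨(∑ j ∈ s, ‖w j‖⁻¹ + |c|) * C, fun i hi => by
      rw [norm_smul, Real.norm_eq_abs]
      exact mul_le_mul (hσ i) (hC i hi) (norm_nonneg _) (by positivity)⟩ h0
    (fun i hi => by
      rw [hdefect i hi, norm_smul, hΔ]
      split_ifs
      · simpa using inv_mul_le_one (a := ‖w (i + 1)‖)
      · simp) i hi
  simpa [norm_smul] using key

lemma sum_filter_mul_norm_Phi_le (hD : HasSolutionBound A Z D) {m : ℤ} {v : X}
    (hv : Phi A 0 m v ∈ Z) {i : ℤ} (hi : i ≤ 0) :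
    (∑ j ∈ Finset.Icc m 0 with j ≤ i, ‖Phi A j m v‖⁻¹) * ‖Phi A i m v‖ ≤ D := by
  have := abs_sum_sub_mul_norm_le hD (Finset.Icc m 0) 0 (w := fun j => Phi A j m v)
    (fun i _ hne => Phi_succ_apply A (not_lt.1 fun him => hne <|
      Finset.sum_eq_zero fun j hj => by simp at hj; omega) v)
    (exists_bound_Iic_of_exists_bound_Iic (m := m)
      ⟨‖v‖, fun j hj => by simp [Phi_of_le A hj]⟩ 0)
    (Z.smul_mem _ hv) hi
  rwa [sub_zero, abs_of_nonneg (by positivity)] at this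

theorem norm_Phi_le_of_Phi_mem (hD : HasSolutionBound A Z D) (hDpos : 0 < D) {m : ℤ} {N : ℕ}
    (hN : m + N ≤ 0) {v : X} (hv : Phi A 0 m v ∈ Z) :
    ‖Phi A (m + N) m v‖ ≤ D * (D / (D + 1)) ^ N * ‖v‖ := by
  by_cases hvN : Phi A (m + N) m v = 0
  · rw [hvN, norm_zero]; positivity
  set w : ℤ → X := fun j => Phi A j m v
  have hwm : w m = v := by simp [w, Phi_of_le A le_rfl]
  have hpos : ∀ j, m ≤ j → j ≤ m + N → 0 < ‖w j‖ := fun j hmj hjN => norm_pos_iff.2 fun h =>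
    hvN <| by rw [← Phi_trans hmj hjN, show Phi A j m v = 0 from h, map_zero]
  have hbound := fun i (hi : i ≤ 0) => sum_filter_mul_norm_Phi_le hD hv hi
  set S : ℕ → ℝ := fun k => ∑ j ∈ Finset.Icc m 0 with j ≤ m + k, ‖w j‖⁻¹
  have hΔ : ∀ k < N, S (k + 1) - S k = ‖w (m + (k + 1 : ℕ))‖⁻¹ := fun k hk => by
    have h := sum_filter_le_add_one_sub (Finset.Icc m 0) (fun j => ‖w j‖⁻¹) (m + k)
    rwa [if_pos (Finset.mem_Icc.2 ⟨by omega, by omega⟩), add_assoc, ← Nat.cast_succ] at h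
  have hS0 : S 0 = ‖w m‖⁻¹ :=
    Finset.sum_eq_single_of_mem m (by simp; omega) fun j hj hjm => absurd (by simp at hj; omega) hjm
  have hstep : ∀ k < N, S k ≤ D * (S (k + 1) - S k) := fun k hk => by
    have hk' := hpos (m + (k + 1 : ℕ)) (by omega) (by omega)
    rw [hΔ k hk, ← div_eq_mul_inv, le_div_iff₀ hk']
    calc S k * ‖w (m + (k + 1 : ℕ))‖ ≤ S (k + 1) * ‖w (m + (k + 1 : ℕ))‖ := by
          gcongr; linarith [hΔ k hk, inv_nonneg.2 hk'.le]
      _ ≤ D := hbound _ (by omega)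
  have key := le_mul_pow_mul_of_mul_le hDpos (hpos m le_rfl (by omega)) (norm_nonneg _) hS0 hstep
    (by rw [mul_comm]; exact hbound _ hN)
  rwa [hwm] at key

lemma sub_sum_filter_mul_norm_le (hD : HasSolutionBound A Z D) {z : ℤ → X}
    (hz : ∀ j, z (j + 1) = A j (z j)) (hb : ∃ C, ∀ j ≤ 0, ‖z j‖ ≤ C) {s : Finset ℤ}
    (hs : ∀ j ∈ s, j ≤ 0) {i : ℤ} (hi : i ≤ 0) :
    (∑ j ∈ s, ‖z j‖⁻¹ - ∑ j ∈ s with j ≤ i, ‖z j‖⁻¹) * ‖z i‖ ≤ D := by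
  have := abs_sum_sub_mul_norm_le hD s (∑ j ∈ s, ‖z j‖⁻¹) (fun i _ _ => hz i) hb
    (by rw [sum_filter_le_of_le hs le_rfl, sub_self, zero_smul]; exact Z.zero_mem) hi
  rwa [abs_sub_comm, abs_of_nonneg (sub_nonneg.2 <| Finset.sum_le_sum_of_subset_of_nonneg
    (Finset.filter_subset _ _) fun _ _ _ => by positivity)] at this

theorem norm_le_of_orbit (hD : HasSolutionBound A Z D) (hDpos : 0 < D) {z : ℤ → X}
    (hz : ∀ j, z (j + 1) = A j (z j)) (hb : ∃ C, ∀ j ≤ 0, ‖z j‖ ≤ C) {m : ℤ} {N : ℕ}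
    (hN : m + N ≤ 0) (hzN : z (m + N) ≠ 0) :
    ‖z m‖ ≤ (D + 1) * (D / (D + 1)) ^ N * ‖z (m + N)‖ := by
  obtain _ | N := N
  · simpa using le_mul_of_one_le_left (norm_nonneg (z m)) (by linarith : 1 ≤ D + 1)
  set n := m + (N + 1 : ℕ)
  have hpos : ∀ j, m ≤ j → j ≤ n → 0 < ‖z j‖ := fun j hmj hjn => norm_pos_iff.2 fun h =>
    hzN <| by rw [eq_Phi_of_succ hjn fun k _ _ => hz k, h, map_zero]
  set s := Finset.Icc m n
  have hs : ∀ j ∈ s, j ≤ n := fun j hj => (Finset.mem_Icc.1 hj).2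
  set c := ∑ j ∈ s, ‖z j‖⁻¹
  have hbound := fun i (hi : i ≤ 0) =>
    sub_sum_filter_mul_norm_le hD hz hb (fun j hj => (hs j hj).trans hN) hi
  set S : ℕ → ℝ := fun k => c - ∑ j ∈ s with j ≤ n - 1 - k, ‖z j‖⁻¹
  have hΔ : ∀ k < N, S (k + 1) - S k = ‖z (n - 1 - k)‖⁻¹ := fun k hk => by
    have h := sum_filter_le_add_one_sub s (fun j => ‖z j‖⁻¹) (n - 1 - (k + 1 : ℕ))
    rw [show n - 1 - ((k + 1 : ℕ) : ℤ) + 1 = n - 1 - k by push_cast; ring,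
      if_pos (Finset.mem_Icc.2 ⟨by omega, by omega⟩)] at h
    simp only [S]
    linarith
  have hS0 : S 0 = ‖z n‖⁻¹ := by
    have h := sum_filter_le_add_one_sub s (fun j => ‖z j‖⁻¹) (n - 1)
    rw [sub_add_cancel, if_pos (Finset.mem_Icc.2 ⟨by omega, le_rfl⟩),
      sum_filter_le_of_le hs le_rfl] at h
    simpa [S] using h
  have hstep : ∀ k < N, S k ≤ D * (S (k + 1) - S k) := fun k hk => by
    have hk' := hpos (n - 1 - k) (by omega) (by omega)
    rw [hΔ k hk, ← div_eq_mul_inv, le_div_iff₀ hk']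
    exact hbound _ (by omega)
  have hSN : S N = c - ∑ j ∈ s with j ≤ m, ‖z j‖⁻¹ := by
    simp only [S, show n - 1 - (N : ℤ) = m by omega]
  have key := le_mul_pow_mul_of_mul_le (a := ‖z m‖) hDpos (hpos n (by omega) le_rfl)
    (norm_nonneg _) hS0 hstep (by rw [mul_comm, hSN]; exact hbound m (by omega))
  calc ‖z m‖ ≤ D * (D / (D + 1)) ^ N * ‖z n‖ := key
    _ = (D + 1) * (D / (D + 1)) ^ (N + 1) * ‖z n‖ := by
      rw [pow_succ]
      field_simp

end Estimates

section Projections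

variable {A : ℤ → X →L[ℝ] X} {Z : Submodule ℝ X} {D : ℝ}

variable (A Z) in
def stableSubspace (t : ℤ) : Submodule ℝ X := Z.comap (Phi A 0 t : X →ₗ[ℝ] X)

lemma mem_stableSubspace {t : ℤ} {v : X} : v ∈ stableSubspace A Z t ↔ Phi A 0 t v ∈ Z := Iff.rfl

variable (A Z) in
open Classical in
/-- Junk value `0` unless the two subspaces are topological complements, as they are for
`t ≤ 0`. -/
def dichotomyProj (t : ℤ) : X →L[ℝ] X :=
  if h : (stableSubspace A Z t).IsTopCompl (Usub A t) then
    (stableSubspace A Z t).projectionL (Usub A t) h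
  else 0

lemma dichotomyProj_eq {t : ℤ} (h : (stableSubspace A Z t).IsTopCompl (Usub A t)) :
    dichotomyProj A Z t = (stableSubspace A Z t).projectionL (Usub A t) h :=
  dif_pos h

/-- The solution forced by the single impulse `v` at time `t - 1` splits `v` at time `t`. -/
lemma mem_stableSubspace_and_sub_mem_Usub {t : ℤ} (ht : t ≤ 0) {v : X} {x : ℤ → X}
    (hb : ∃ C, ∀ n ≤ 0, ‖x n‖ ≤ C)
    (hx : ∀ n ≤ -1, x (n + 1) = A n (x n) + (Pi.single (t - 1) v : ℤ → X) n)
    (h0 : x 0 ∈ Z) : x t ∈ stableSubspace A Z t ∧ v - x t ∈ Usub A t := by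
  have hhom : ∀ n ≤ -1, n ≠ t - 1 → x (n + 1) = A n (x n) := fun n hn hnt => by
    simpa [Pi.single_eq_of_ne hnt] using hx n hn
  refine ⟨?_, ?_⟩
  · rw [mem_stableSubspace, ← eq_Phi_of_succ ht fun k htk hk0 => hhom k (by omega) (by omega)]
    exact h0
  · obtain ⟨C, hC⟩ := hb
    have hU : x (t - 1) ∈ Uset A (t - 1) := mem_Uset_of_le ⟨C, fun n hn => hC n (by omega)⟩
      (fun n hn => hhom n (by omega) (by omega)) le_rfl
    have hxt : x t = A (t - 1) (x (t - 1)) + v := by simpa using hx (t - 1) (by omega)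
    have hAU := map_mem_Uset hU
    rw [sub_add_cancel] at hAU
    rw [hxt, show v - (A (t - 1) (x (t - 1)) + v) = -A (t - 1) (x (t - 1)) by abel]
    exact (Usub A t).neg_mem hAU

lemma isCompl_stableSubspace_Usub (hadm : IsAdmissible A)
    (hdecomp : ∀ v : X, ∃ s ∈ Uset A 0, ∃ z ∈ Z, v = s + z) (hZU : ∀ v ∈ Uset A 0, v ∈ Z → v = 0)
    (huniq : HasUniqueBoundedPast A) {t : ℤ} (ht : t ≤ 0) :
    IsCompl (stableSubspace A Z t) (Usub A t) := by
  refine ⟨Submodule.disjoint_def.2 fun e he heU => ?_,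
    Submodule.codisjoint_iff_exists_add_eq.2 fun v => ?_⟩
  · exact eq_zero_of_mem_Uset_of_Phi_eq_zero huniq ht heU (hZU _ (Phi_mem_Uset ht heU) he)
  · obtain ⟨x, hb, hx, h0⟩ := exists_solution_mem hadm hdecomp (y := Pi.single (t - 1) v)
      ⟨‖v‖, fun n _ => norm_pi_single_apply_le _ n v⟩
    obtain ⟨h1, h2⟩ := mem_stableSubspace_and_sub_mem_Usub ht hb hx h0
    exact ⟨x t, v - x t, h1, h2, add_sub_cancel _ _⟩

lemma norm_projection_stableSubspace_le (hD : HasSolutionBound A Z D)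
    (hadm : IsAdmissible A) (hdecomp : ∀ v : X, ∃ s ∈ Uset A 0, ∃ z ∈ Z, v = s + z) {t : ℤ}
    (ht : t ≤ 0) (h : IsCompl (stableSubspace A Z t) (Usub A t)) (v : X) :
    ‖(stableSubspace A Z t).projection (Usub A t) h v‖ ≤ D * ‖v‖ := by
  obtain ⟨x, hb, hx, h0⟩ := exists_solution_mem hadm hdecomp (y := Pi.single (t - 1) v)
    ⟨‖v‖, fun n _ => norm_pi_single_apply_le _ n v⟩
  obtain ⟨h1, h2⟩ := mem_stableSubspace_and_sub_mem_Usub ht hb hx h0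
  rw [Submodule.projection_eq_of_mem h h1 h2]
  refine hD x ‖v‖ hb h0 (fun n hn => ?_) t ht
  rw [hx n hn, add_sub_cancel_left]
  exact norm_pi_single_apply_le _ n v

lemma isTopCompl_stableSubspace_Usub (hD : HasSolutionBound A Z D) (hadm : IsAdmissible A)
    (hdecomp : ∀ v : X, ∃ s ∈ Uset A 0, ∃ z ∈ Z, v = s + z) (hZU : ∀ v ∈ Uset A 0, v ∈ Z → v = 0)
    (huniq : HasUniqueBoundedPast A) {t : ℤ} (ht : t ≤ 0) :
    (stableSubspace A Z t).IsTopCompl (Usub A t) :=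
  have h := isCompl_stableSubspace_Usub hadm hdecomp hZU huniq ht
  ⟨h, AddMonoidHomClass.continuous_of_bound _ D
    (norm_projection_stableSubspace_le hD hadm hdecomp ht h)⟩

end Projections

section Dichotomy

variable {A : ℤ → X →L[ℝ] X} {Z : Submodule ℝ X} {D : ℝ}

lemma exp_neg_log_mul_eq_pow (hD : 0 < D) {m n : ℤ} {N : ℕ} (h : m + N = n) :
    Real.exp (-Real.log ((D + 1) / D) * ((n : ℝ) - m)) = (D / (D + 1)) ^ N := by
  rw [← h, show -Real.log ((D + 1) / D) * (((m + N : ℤ) : ℝ) - m) = N * Real.log (D / (D + 1)) by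
    rw [← inv_div, Real.log_inv]; push_cast; ring, Real.exp_nat_mul, Real.exp_log (by positivity)]

lemma dichotomyProj_comp_self {t : ℤ} (h : (stableSubspace A Z t).IsTopCompl (Usub A t)) :
    (dichotomyProj A Z t).comp (dichotomyProj A Z t) = dichotomyProj A Z t := by
  rw [dichotomyProj_eq h]
  exact Submodule.isIdempotentElem_projectionL h

lemma comp_dichotomyProj (hP : ∀ t ≤ 0, (stableSubspace A Z t).IsTopCompl (Usub A t)) {n : ℤ}
    (hn : n ≤ -1) : (A n).comp (dichotomyProj A Z n) = (dichotomyProj A Z (n + 1)).comp (A n) := by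
  have hPn := hP n (by omega)
  ext v
  rw [comp_apply, comp_apply, dichotomyProj_eq hPn, dichotomyProj_eq (hP (n + 1) (by omega)),
    Submodule.coe_projectionL, Submodule.coe_projectionL]
  refine (Submodule.projection_eq_of_mem _ ?_ ?_).symm
  · rw [mem_stableSubspace, Phi_map_apply (by omega)]
    exact Submodule.projection_apply_mem hPn.isCompl v
  · rw [← map_sub]
    exact map_mem_Uset (Submodule.sub_projection_mem hPn.isCompl v)

lemma bijOn_dichotomyProj (hP : ∀ t ≤ 0, (stableSubspace A Z t).IsTopCompl (Usub A t)) {n : ℤ}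
    (hn : n ≤ -1) :
    Set.BijOn (A n) {x | dichotomyProj A Z n x = 0} {x | dichotomyProj A Z (n + 1) x = 0} := by
  simp only [dichotomyProj_eq (hP n (by omega)), dichotomyProj_eq (hP (n + 1) (by omega)),
    Submodule.projectionL_apply_eq_zero_iff]
  refine ⟨fun v hv => map_mem_Uset hv, fun u hu v hv huv => ?_, fun w ⟨x, hxw, hb, hx⟩ => ?_⟩
  · have hd : u - v ∈ stableSubspace A Z n := by
      rw [mem_stableSubspace, ← Phi_map_apply (by omega), map_sub, huv, sub_self, map_zero]
      exact Z.zero_mem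
    exact sub_eq_zero.1 (Submodule.disjoint_def.1 (hP n (by omega)).isCompl.disjoint _ hd
      ((Usub A n).sub_mem hu hv))
  · refine ⟨x n, mem_Uset_of_le hb (fun k hk => by simpa using hx (k + 1) (by omega))
      (by omega), ?_⟩
    rw [← hxw, hx (n + 1) le_rfl, add_sub_cancel_right]

theorem norm_Phi_comp_dichotomyProj_le (hD : HasSolutionBound A Z D) (hDpos : 0 < D)
    (hP : ∀ t ≤ 0, (stableSubspace A Z t).IsTopCompl (Usub A t))
    (hPnorm : ∀ t ≤ 0, ∀ v, ‖dichotomyProj A Z t v‖ ≤ D * ‖v‖) {m n : ℤ} (hm : m ≤ 0)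
    (hnm : n ≤ m) :
    ‖(Phi A m n).comp (dichotomyProj A Z n)‖ ≤
      (D + 1) ^ 2 * Real.exp (-Real.log ((D + 1) / D) * ((m : ℝ) - n)) := by
  obtain ⟨N, rfl⟩ := Int.le.dest hnm
  rw [exp_neg_log_mul_eq_pow hDpos rfl]
  refine opNorm_le_bound _ (by positivity) fun v => ?_
  have hv : Phi A 0 n (dichotomyProj A Z n v) ∈ Z := by
    rw [dichotomyProj_eq (hP n (by omega))]
    exact Submodule.projectionL_apply_mem (hP n (by omega)) v
  calc ‖Phi A (n + N) n (dichotomyProj A Z n v)‖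
      ≤ D * (D / (D + 1)) ^ N * ‖dichotomyProj A Z n v‖ := norm_Phi_le_of_Phi_mem hD hDpos hm hv
    _ ≤ D * (D / (D + 1)) ^ N * (D * ‖v‖) := by gcongr; exact hPnorm n (by omega) v
    _ = D * D * ((D / (D + 1)) ^ N * ‖v‖) := by ring
    _ ≤ (D + 1) ^ 2 * ((D / (D + 1)) ^ N * ‖v‖) :=
      mul_le_mul_of_nonneg_right (by nlinarith) (by positivity)
    _ = (D + 1) ^ 2 * (D / (D + 1)) ^ N * ‖v‖ := by ring

theorem norm_le_of_dichotomyProj_eq_zero (hD : HasSolutionBound A Z D) (hDpos : 0 < D)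
    (hP : ∀ t ≤ 0, (stableSubspace A Z t).IsTopCompl (Usub A t))
    (hPnorm : ∀ t ≤ 0, ∀ v, ‖dichotomyProj A Z t v‖ ≤ D * ‖v‖) {m n : ℤ} (hn : n ≤ 0)
    (hmn : m ≤ n) {x y : X} (hx : dichotomyProj A Z m x = 0)
    (hxy : Phi A n m x = y - dichotomyProj A Z n y) :
    ‖x‖ ≤ (D + 1) ^ 2 * Real.exp (-Real.log ((D + 1) / D) * ((n : ℝ) - m)) * ‖y‖ := by
  obtain ⟨N, rfl⟩ := Int.le.dest hmn
  rw [exp_neg_log_mul_eq_pow hDpos rfl]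
  rw [dichotomyProj_eq (hP m (by omega)), Submodule.projectionL_apply_eq_zero_iff] at hx
  by_cases h0 : Phi A (m + N) m x = 0
  · have hxs : x ∈ stableSubspace A Z m := by
      rw [mem_stableSubspace, ← Phi_trans hmn hn, h0, map_zero]
      exact Z.zero_mem
    rw [Submodule.disjoint_def.1 (hP m (by omega)).isCompl.disjoint x hxs hx, norm_zero]
    positivity
  have hy : ‖Phi A (m + N) m x‖ ≤ (D + 1) * ‖y‖ := by
    rw [hxy]
    linarith [norm_sub_le y (dichotomyProj A Z (m + N) y), hPnorm _ hn y]
  obtain ⟨z, rfl, hz, hb⟩ := exists_orbit_of_mem_Uset hx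
  have hzN : z (m + N) = Phi A (m + N) m (z m) := eq_Phi_of_succ hmn fun j _ _ => hz j
  calc ‖z m‖ ≤ (D + 1) * (D / (D + 1)) ^ N * ‖z (m + N)‖ :=
        norm_le_of_orbit hD hDpos hz (hb 0) hn (hzN ▸ h0)
    _ ≤ (D + 1) * (D / (D + 1)) ^ N * ((D + 1) * ‖y‖) := by rw [hzN]; gcongr
    _ = (D + 1) ^ 2 * (D / (D + 1)) ^ N * ‖y‖ := by ring

end Dichotomy

theorem dichotomy_of_admissibility_Zminus {X : Type u} [NormedAddCommGroup X]
    [NormedSpace ℝ X] [CompleteSpace X] (A : ℤ → X →L[ℝ] X)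
    (hadm : ∀ y : ℤ → X, (∃ C : ℝ, ∀ n : ℤ, n ≤ -1 → ‖y n‖ ≤ C) →
      ∃ x : ℤ → X, (∃ C : ℝ, ∀ n : ℤ, n ≤ 0 → ‖x n‖ ≤ C) ∧
        ∀ n : ℤ, n ≤ -1 → x (n + 1) = A n (x n) + y n)
    (hcompl : IsComplementedSubspace (Uset A 0))
    (huniq : ∀ x : ℤ → X, x 0 = 0 → (∃ C : ℝ, ∀ n : ℤ, n ≤ 0 → ‖x n‖ ≤ C) →
      (∀ n : ℤ, n ≤ 0 → x n = A (n - 1) (x (n - 1))) → ∀ n : ℤ, n ≤ 0 → x n = 0) :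
    ExpDichotomy {n : ℤ | n ≤ 0} {n : ℤ | n ≤ -1} A := by
  obtain ⟨Z, hZ, hZU, hdecomp⟩ := hcompl
  obtain ⟨D, hDpos, hD⟩ := exists_hasSolutionBound hZ hadm hdecomp hZU huniq
  have hP : ∀ t ≤ 0, (stableSubspace A Z t).IsTopCompl (Usub A t) := fun t ht =>
    isTopCompl_stableSubspace_Usub hD hadm hdecomp hZU huniq ht
  have hPnorm : ∀ t ≤ 0, ∀ v, ‖dichotomyProj A Z t v‖ ≤ D * ‖v‖ := fun t ht v => by
    rw [dichotomyProj_eq (hP t ht)]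
    exact norm_projection_stableSubspace_le hD hadm hdecomp ht _ v
  exact ⟨dichotomyProj A Z, (D + 1) ^ 2, Real.log ((D + 1) / D), by positivity,
    Real.log_pos ((one_lt_div hDpos).2 (by linarith)),
    fun t ht => dichotomyProj_comp_self (hP t ht),
    fun n hn => comp_dichotomyProj hP hn,
    fun n hn => bijOn_dichotomyProj hP hn,
    fun m n hm _ hnm => norm_Phi_comp_dichotomyProj_le hD hDpos hP hPnorm hm hnm,
    fun m n _ hn hmn _ _ hx hxy =>
      norm_le_of_dichotomyProj_eq_zero hD hDpos hP hPnorm hn hmn hx hxy⟩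

end
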